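/- arXiv:0705.0457 — 3 statements merged into one kernel-verified Lean document; each statement's English description precedes it below -/
import Mathlib

section
/- Let A, B, x0, a be real numbers with 0 < A < B, a > C where C := B/A, and x0 ≥ 2. Suppose that the prime counting function π satisfies the Chebyshev-type inequalities A·x/log x < π(x) < B·x/log x for every real x > x0. Then for any pair of consecutive primes p < q (i.e., q is the smallest prime greater than p) with p > max(x0, a^{C/(a−C)}), one has q < a·p. -/
/-!
If `q ≥ a p`, then `π` is constant on `[p, q) ⊇ [p, a p)`, so for `x` just below `a p` the
Chebyshev bounds give `A x / log x < π(x) = π(p) < B p / log p`. But with `C = B/A`, the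
condition `p > a^(C/(a-C))` is exactly `B p / log p < A (a p) / log (a p)`, and letting
`x → a p` gives a contradiction.
-/

/-- The prime counting function at a real argument: the number of primes `≤ x`. -/
noncomputable def primePi (x : ℝ) : ℕ := Nat.primeCounting ⌊x⌋₊

/-- `p` and `q` are consecutive primes: `q` is the smallest prime greater than `p`. -/
def ConsecutivePrimes (p q : ℕ) : Prop :=
  p.Prime ∧ q.Prime ∧ p < q ∧ ∀ r : ℕ, r.Prime → p < r → q ≤ r

open Real Filter Set

theorem Nat.primeCounting_eq_of_forall_prime_lt {p n : ℕ} (hpn : p ≤ n)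
    (h : ∀ r : ℕ, r.Prime → p < r → n < r) : n.primeCounting = p.primeCounting := by
  refine le_antisymm ?_ (Nat.monotone_primeCounting hpn)
  by_contra! hlt
  obtain ⟨r, ⟨hpr, hrn⟩, hr⟩ := Nat.exists_of_count_lt_count hlt
  exact absurd (h r hr hpr) (by omega)

theorem primePi_eq_of_forall_prime_lt {p : ℕ} {x : ℝ} (hpx : p ≤ x)
    (h : ∀ r : ℕ, r.Prime → p < r → x < r) : primePi x = primePi p := by
  rw [primePi, primePi, Nat.floor_natCast]
  refine Nat.primeCounting_eq_of_forall_prime_lt (Nat.le_floor hpx) fun r hr hpr ↦ ?_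
  exact_mod_cast (Nat.floor_le ((Nat.cast_nonneg p).trans hpx)).trans_lt (h r hr hpr)

theorem continuousAt_mul_div_log (A : ℝ) {x : ℝ} (hx : 1 < x) :
    ContinuousAt (fun y ↦ A * y / log y) x :=
  (continuousAt_id.const_mul A).div (continuousAt_log (by positivity)) (log_pos hx).ne'

theorem ContinuousAt.exists_mem_Ioo_lt {f : ℝ → ℝ} {s t c : ℝ} (hf : ContinuousAt f t)
    (hc : c < f t) (hst : s < t) : ∃ y ∈ Ioo s t, c < f y :=
  (Filter.Eventually.and (Ioo_mem_nhdsLT hst)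
    ((hf.eventually (eventually_gt_nhds hc)).filter_mono nhdsWithin_le_nhds)).exists

theorem mul_div_log_lt_mul_div_log_mul {C a x : ℝ} (hCa : C < a) (ha : 1 < a) (hx : 1 < x)
    (hax : a ^ (C / (a - C)) < x) : C * x / log x < a * x / log (a * x) := by
  have hlogx : 0 < log x := log_pos hx
  have hlogax : log (a * x) = log a + log x := log_mul (by positivity) (by positivity)
  have hexp : C * log a < (a - C) * log x := by
    have := log_lt_log (by positivity) hax
    rwa [log_rpow (by positivity), div_mul_eq_mul_div, div_lt_iff₀' (by linarith)] at this
  rw [div_lt_div_iff₀ hlogx (by rw [hlogax]; linarith [log_pos ha]), hlogax]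
  nlinarith [(by positivity : 0 < x)]

/-- Chebyshev-type bounds `A·x/log x < π(x) < B·x/log x` for `x > x0` imply that
consecutive primes `p < q` with `p > max(x0, a^(C/(a−C)))`, where `C = B/A`,
satisfy `q < a·p`. -/
theorem chebyshev_consecutive_prime_gap
    (A B x0 a : ℝ) (hA : 0 < A) (hAB : A < B) (ha : a > B / A) (hx0 : x0 ≥ 2)
    (hcheb : ∀ x : ℝ, x > x0 →
      A * x / Real.log x < (primePi x : ℝ) ∧ (primePi x : ℝ) < B * x / Real.log x)
    (p q : ℕ) (hpq : ConsecutivePrimes p q)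
    (hp : (p : ℝ) > max x0 (a ^ ((B / A) / (a - B / A)))) :
    (q : ℝ) < a * p := by
  by_contra! hqa
  obtain ⟨hx0p, hap⟩ := max_lt_iff.mp hp
  have ha1 : 1 < a := ((one_lt_div hA).mpr hAB).trans ha
  have hp1 : (1 : ℝ) < p := by linarith
  have hgap : B * p / log p < A * (a * p) / log (a * p) := by
    have := mul_lt_mul_of_pos_left (mul_div_log_lt_mul_div_log_mul ha ha1 hp1 hap) hA
    rwa [mul_div_assoc, ← mul_assoc, mul_div_cancel₀ _ hA.ne', ← mul_div_assoc,
      ← mul_div_assoc] at this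
  obtain ⟨x, ⟨hpx, hxap⟩, hx⟩ := (continuousAt_mul_div_log A (by nlinarith)).exists_mem_Ioo_lt
    hgap (show max x0 p < a * p by rw [max_lt_iff]; constructor <;> nlinarith)
  rw [max_lt_iff] at hpx
  have hπ : primePi x = primePi p := primePi_eq_of_forall_prime_lt hpx.2.le
    fun r hr hpr ↦ hxap.trans_le (hqa.trans (by exact_mod_cast hpq.2.2.2 r hr hpr))
  have hlower := (hcheb x hpx.1).1
  have hupper := (hcheb p hx0p).2
  rw [hπ] at hlower
  linarith
end

section
/- Suppose that the prime counting function π satisfies 1·x/log x < π(x) < 1.130289·x/log x for every real x > 100000. Then for every pair of consecutive primes p < q with p > 100000, one has q < 1.144·p. -/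
/-- π is constant on a prime-free interval. -/
lemma primeCounting_eq_of_no_prime (p q : ℕ) (hq : ∀ r : ℕ, r.Prime → p < r → q ≤ r)
    (n : ℕ) (hn : p ≤ n) (hnq : n < q) : Nat.primeCounting n = Nat.primeCounting p := by
  induction n, hn using Nat.le_induction with
  | base => rfl
  | succ n hn ih =>
    have hnotp : ¬ (n+1).Prime := fun hpr => absurd (hq _ hpr (by omega)) (by omega)
    have : Nat.primeCounting (n+1) = Nat.primeCounting n := by
      simp [Nat.primeCounting, Nat.primeCounting', Nat.count_succ, hnotp]
    rw [this]; exact ih (by omega)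

lemma log_1144_lt : Real.log 1.144 < 0.1355 := by
  rw [Real.log_lt_iff_lt_exp (by norm_num)]
  have h : (1.006775 : ℝ) ≤ Real.exp 0.006775 := by
    have := Real.add_one_le_exp (0.006775 : ℝ); linarith
  have h2 : ((1.006775 : ℝ))^(20:ℕ) ≤ (Real.exp 0.006775)^(20:ℕ) :=
    pow_le_pow_left₀ (by norm_num) h 20
  have h3 : (Real.exp 0.006775)^(20:ℕ) = Real.exp 0.1355 := by
    rw [← Real.exp_nat_mul]; norm_num
  nlinarith [h2, h3]

lemma log_1e5_gt : (11.4237 : ℝ) < Real.log 100000 := by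
  have h2 : (100000 : ℝ) = 2^(16:ℕ) * 1.52587890625 := by norm_num
  have h3 : Real.log 100000 = 16 * Real.log 2 + Real.log 1.52587890625 := by
    rw [h2, Real.log_mul (by norm_num) (by norm_num), Real.log_pow]; push_cast; ring
  have h4 : (0.6931471803 : ℝ) < Real.log 2 := Real.log_two_gt_d9
  have h5 : (1:ℝ) - (1.52587890625)⁻¹ ≤ Real.log 1.52587890625 :=
    Real.one_sub_inv_le_log_of_pos (by norm_num)
  rw [h3]; nlinarith

/-- If `x/log x < π(x) < 1.130289·x/log x` for all real `x > 100000`, then any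
consecutive primes `p < q` with `p > 100000` satisfy `q < 1.144·p`. -/
theorem consecutive_prime_ratio_of_chebyshev
    (hcheb : ∀ x : ℝ, x > 100000 →
      1 * x / Real.log x < (primePi x : ℝ) ∧ (primePi x : ℝ) < 1.130289 * x / Real.log x)
    (p q : ℕ) (hpq : ConsecutivePrimes p q) (hp : p > 100000) :
    (q : ℝ) < 1.144 * p := by
  by_contra hcon
  push_neg at hcon
  obtain ⟨hp', hq', hlt, hmin⟩ := hpq
  have hpR : (100000 : ℝ) < p := by exact_mod_cast hp
  set y : ℝ := 1.144 * p - 1/2 with hy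
  have hyp : (p : ℝ) ≤ y := by rw [hy]; nlinarith
  have hy1 : y > 100000 := by rw [hy]; nlinarith
  have hfl : p ≤ ⌊y⌋₊ := Nat.le_floor hyp
  have hfq : ⌊y⌋₊ < q := by
    have hyq : y < q := by rw [hy]; nlinarith
    exact (Nat.floor_lt (by linarith)).mpr hyq
  have hπ : primePi y = primePi p := by
    unfold primePi
    rw [Nat.floor_natCast]
    exact primeCounting_eq_of_no_prime p q hmin ⌊y⌋₊ hfl hfq
  obtain ⟨h1, h2⟩ := hcheb p hpR
  obtain ⟨h3, h4⟩ := hcheb y hy1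
  rw [hπ] at h3
  have hLp : (11.4237 : ℝ) < Real.log p := by
    calc (11.4237:ℝ) < Real.log 100000 := log_1e5_gt
    _ ≤ Real.log p := Real.log_le_log (by norm_num) (le_of_lt hpR)
  have hLppos : (0:ℝ) < Real.log p := by linarith
  have hLypos : (0:ℝ) < Real.log y := by
    calc (0:ℝ) < Real.log p := hLppos
    _ ≤ Real.log y := Real.log_le_log (by positivity) hyp
  have hLy : Real.log y < Real.log p + 0.1355 := by
    have h5 : Real.log y < Real.log (1.144 * p) :=
      Real.log_lt_log (by linarith) (by rw [hy]; linarith)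
    have h6 : Real.log (1.144 * p) = Real.log 1.144 + Real.log p :=
      Real.log_mul (by norm_num) (by positivity)
    have := log_1144_lt
    linarith
  have key : 1 * y / Real.log y < 1.130289 * p / Real.log p := lt_trans h3 h2
  rw [div_lt_div_iff₀ hLypos hLppos] at key
  nlinarith [mul_pos (sub_pos.mpr hLp) (sub_pos.mpr hpR), hLppos, hLypos,
    mul_lt_mul_of_pos_left hLy (show (0:ℝ) < 1.130289 * p by positivity)]
end

section
/- For every even integer k with k = 10 or k ≥ 16, there exist a prime p > k and an integer t such that, setting d = gcd(p − 1, k − 2) and m = (p − 1)/d, one has 0 < t < m, gcd(t, m) = 1, and both d·t + 2 < k and p + 1 − d·t < k. -/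
/-!
Write `d = gcd (p - 1) (k - 2)`, `p - 1 = d m` and `k - 2 = d b`. The two inequalities on `t` say
exactly that `m - b < t < b`, and some `t` coprime to `m` has `m - 4 ≤ 2 t ≤ m`; so it
suffices to find a prime `p > k` with `m + 5 ≤ 2 b`, that is `p + 5 d + 3 ≤ 2 k`.

For `k < 2 ^ 20`, apart from a few small cases, such a prime is `p = 2 q + 1` for a Sophie
Germain prime `q` with `p` just above `k`, since then `d = 2`. For larger `k` a prime
`p ∈ (k, 2k]` that fails is of the form `2k - 3 - c d` with `d ∣ k - 2` and `c < 5`, so there are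
at most `10 √k + 1` of them, too few to account for the size of the central binomial coefficient
`C(2k, k)`, as in the proof of Bertrand's postulate.
-/

open Finset

theorem Nat.exists_coprime_near_half (m : ℕ) (hm : 2 < m) :
    ∃ t, 2 * t ≤ m ∧ m ≤ 2 * t + 4 ∧ t.Coprime m := by
  have coprime_add_two_mul {t r : ℕ} (h : t.Coprime r) : t.Coprime (r + 2 * t) :=
    (Nat.coprime_add_mul_right_right t r 2).mpr h
  rcases Nat.even_or_odd m with hm_even | ⟨t, rfl⟩
  · obtain ⟨t, r, ht, hr, rfl⟩ : ∃ t r, Odd t ∧ (r = 2 ∨ r = 4) ∧ m = r + 2 * t :=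
      ⟨2 * (m / 4) - 1, m - 2 * (2 * (m / 4) - 1), ⟨m / 4 - 1, by grind⟩, by grind, by grind⟩
    refine ⟨t, by omega, by omega, coprime_add_two_mul ?_⟩
    rcases hr with rfl | rfl
    · exact Nat.coprime_two_right.mpr ht
    · exact (Nat.coprime_two_right.mpr ht).pow_right 2
  · refine ⟨t, by omega, by omega, ?_⟩
    rw [add_comm]
    exact coprime_add_two_mul (Nat.coprime_one_right t)

theorem exists_weight_reduction {k p : ℕ} (hkp : k < p)
    (h : p + 5 * Nat.gcd (p - 1) (k - 2) + 3 ≤ 2 * k) :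
    ∃ t, let d := Nat.gcd (p - 1) (k - 2)
      let m := (p - 1) / d
      0 < t ∧ t < m ∧ Nat.gcd t m = 1 ∧ d * t + 2 < k ∧ p + 1 - d * t < k := by
  set d := Nat.gcd (p - 1) (k - 2)
  have hd : 0 < d := Nat.gcd_pos_of_pos_right _ (by omega)
  obtain ⟨m, hm⟩ : d ∣ p - 1 := Nat.gcd_dvd_left _ _
  obtain ⟨b, hb⟩ : d ∣ k - 2 := Nat.gcd_dvd_right _ _
  have hbm : b < m := Nat.lt_of_mul_lt_mul_left (a := d) (by omega)
  have hmb : m + 5 ≤ 2 * b :=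
    Nat.le_of_mul_le_mul_left (by rw [mul_add, mul_left_comm]; omega) hd
  obtain ⟨t, ht_le, ht_ge, ht⟩ := Nat.exists_coprime_near_half m (by omega)
  have htb : d * t < d * b := Nat.mul_lt_mul_of_pos_left (by omega) hd
  have hmtb : d * m < d * t + d * b := by
    rw [← mul_add]
    exact Nat.mul_lt_mul_of_pos_left (by omega) hd
  refine ⟨t, ?_⟩
  simp only [hm, Nat.mul_div_cancel_left _ hd]
  exact ⟨by omega, by omega, ht, by omega, by omega⟩

def HasReductionPrime (k : ℕ) : Prop :=
  ∃ p, p.Prime ∧ k < p ∧ p + 5 * Nat.gcd (p - 1) (k - 2) + 3 ≤ 2 * k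

theorem Nat.gcd_two_mul_prime_eq_two {q n : ℕ} (hq : q.Prime) (hn : Even n) (hn0 : 0 < n)
    (hnq : n < 2 * q) : Nat.gcd (2 * q) n = 2 := by
  obtain ⟨e, he⟩ : 2 ∣ Nat.gcd (2 * q) n :=
    Nat.dvd_gcd (dvd_mul_right 2 q) (even_iff_two_dvd.mp hn)
  have heq : e ∣ q := (Nat.mul_dvd_mul_iff_left two_pos).mp (he ▸ Nat.gcd_dvd_left (2 * q) n)
  rcases hq.eq_one_or_self_of_dvd e heq with he_one | he_q
  · rwa [he_one] at he
  · have := Nat.le_of_dvd hn0 (he ▸ Nat.gcd_dvd_right (2 * q) n)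
    omega

theorem hasReductionPrime_of_sophieGermain {k q : ℕ} (hk : Even k) (hq : q.Prime)
    (hp : (2 * q + 1).Prime) (hkp : k < 2 * q + 1) (hpk : 2 * q + 14 ≤ 2 * k) :
    HasReductionPrime k := by
  refine ⟨2 * q + 1, hp, hkp, ?_⟩
  rw [Nat.add_sub_cancel,
    Nat.gcd_two_mul_prime_eq_two hq (hk.tsub even_two) (by omega) (by omega)]
  omega

def ReductionPrimesBelow (c : ℕ) : Prop :=
  ∀ k, Even k → 16 ≤ k → k < c → HasReductionPrime k

theorem ReductionPrimesBelow.extend {c : ℕ} (h : ReductionPrimesBelow c) (q : ℕ)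
    (hq : q.Prime) (hp : (2 * q + 1).Prime) (hqc : 2 * q + 14 ≤ 2 * c) :
    ReductionPrimesBelow (2 * q + 1) := by
  intro k hk hk16 hkp
  by_cases hkc : k < c
  · exact h k hk hk16 hkc
  · exact hasReductionPrime_of_sophieGermain hk hq hp hkp (by omega)

theorem reductionPrimesBelow_31 : ReductionPrimesBelow 31 := by
  intro k hk hk16 hk31
  obtain rfl | rfl | rfl | rfl | rfl | rfl | rfl | rfl :
      k = 16 ∨ k = 18 ∨ k = 20 ∨ k = 22 ∨ k = 24 ∨ k = 26 ∨ k = 28 ∨ k = 30 := by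
    obtain ⟨j, rfl⟩ := hk
    omega
  exacts [⟨17, by norm_num⟩, ⟨19, by norm_num⟩, ⟨23, by norm_num⟩, ⟨23, by norm_num⟩,
    ⟨29, by norm_num⟩, ⟨29, by norm_num⟩, ⟨29, by norm_num⟩, ⟨31, by norm_num⟩]

theorem reductionPrimesBelow_1048703 : ReductionPrimesBelow 1048703 :=
  reductionPrimesBelow_31
    |>.extend 23 (by norm_num) (by norm_num) (by norm_num)
    |>.extend 29 (by norm_num) (by norm_num) (by norm_num)
    |>.extend 41 (by norm_num) (by norm_num) (by norm_num)
    |>.extend 53 (by norm_num) (by norm_num) (by norm_num)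
    |>.extend 83 (by norm_num) (by norm_num) (by norm_num)
    |>.extend 113 (by norm_num) (by norm_num) (by norm_num)
    |>.extend 191 (by norm_num) (by norm_num) (by norm_num)
    |>.extend 359 (by norm_num) (by norm_num) (by norm_num)
    |>.extend 593 (by norm_num) (by norm_num) (by norm_num)
    |>.extend 1103 (by norm_num) (by norm_num) (by norm_num)
    |>.extend 2129 (by norm_num) (by norm_num) (by norm_num)
    |>.extend 4211 (by norm_num) (by norm_num) (by norm_num)
    |>.extend 8273 (by norm_num) (by norm_num) (by norm_num)
    |>.extend 16493 (by norm_num) (by norm_num) (by norm_num)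
    |>.extend 32933 (by norm_num) (by norm_num) (by norm_num)
    |>.extend 65843 (by norm_num) (by norm_num) (by norm_num)
    |>.extend 131321 (by norm_num) (by norm_num) (by norm_num)
    |>.extend 262193 (by norm_num) (by norm_num) (by norm_num)
    |>.extend 524351 (by norm_num) (by norm_num) (by norm_num)

theorem Nat.card_divisors_le_two_mul_sqrt (n : ℕ) : #n.divisors ≤ 2 * n.sqrt := by
  set s := n.sqrt
  have hsub : n.divisors ⊆ Icc 1 s ∪ (Icc 1 s).image (n / ·) := by
    intro d hd
    obtain ⟨hdn, hn⟩ := Nat.mem_divisors.mp hd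
    have hd0 : 0 < d := Nat.pos_of_dvd_of_pos hdn (Nat.pos_of_ne_zero hn)
    rcases le_or_gt d s with hds | hsd
    · exact mem_union_left _ (mem_Icc.mpr ⟨hd0, hds⟩)
    refine mem_union_right _ (mem_image.mpr ⟨n / d, mem_Icc.mpr ⟨?_, ?_⟩, ?_⟩)
    · exact Nat.div_pos (Nat.le_of_dvd (Nat.pos_of_ne_zero hn) hdn) hd0
    · refine Nat.lt_succ_iff.mp ((Nat.div_lt_iff_lt_mul hd0).mpr ?_)
      calc n < (s + 1) ^ 2 := Nat.lt_succ_sqrt' n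
        _ ≤ (s + 1) * d := by rw [sq]; exact Nat.mul_le_mul_left _ hsd
    · exact Nat.div_div_self hdn hn
  calc #n.divisors ≤ #(Icc 1 s ∪ (Icc 1 s).image (n / ·)) := card_le_card hsub
    _ ≤ #(Icc 1 s) + #(Icc 1 s) :=
      (card_union_le _ _).trans (Nat.add_le_add_left Finset.card_image_le _)
    _ = 2 * s := by rw [Nat.card_Icc]; omega

theorem card_primes_Ioc_le_of_not_hasReductionPrime {n : ℕ} (hn : 2 < n)
    (h : ¬HasReductionPrime n) :
    #{p ∈ Ioc n (2 * n) | p.Prime} ≤ 5 * #(n - 2).divisors + 1 := by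
  simp only [HasReductionPrime, not_exists, not_and, not_le] at h
  have hsub : {p ∈ Ioc n (2 * n) | p.Prime} ⊆
      insert (2 * n - 1) (((n - 2).divisors ×ˢ range 5).image fun x ↦ 2 * n - 3 - x.2 * x.1) := by
    intro p hp
    obtain ⟨⟨hnp, hp2n⟩, hp⟩ := by simpa only [mem_filter, mem_Ioc] using hp
    have hp_odd : p % 2 = 1 := Nat.odd_iff.mp (hp.odd_of_ne_two (by omega))
    rcases lt_or_ge (2 * n - 3) p with hbig | hsmall
    · exact mem_insert.mpr (Or.inl (by omega))
    refine mem_insert_of_mem (mem_image.mpr ?_)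
    set d := Nat.gcd (p - 1) (n - 2)
    have hd : 0 < d := Nat.gcd_pos_of_pos_right _ (by omega)
    obtain ⟨c, hc⟩ : d ∣ 2 * n - 3 - p := by
      have := Nat.dvd_sub (Nat.gcd_dvd_right (p - 1) (n - 2))
        (Nat.dvd_sub (Nat.gcd_dvd_left (p - 1) (n - 2)) (Nat.gcd_dvd_right _ _))
      rwa [show n - 2 - (p - 1 - (n - 2)) = 2 * n - 3 - p by omega] at this
    have hc5 : c < 5 := Nat.lt_of_mul_lt_mul_left (a := d) (by have := h p hp hnp; omega)
    refine ⟨(d, c), mem_product.mpr ⟨Nat.mem_divisors.mpr ⟨Nat.gcd_dvd_right _ _, by omega⟩,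
      mem_range.mpr hc5⟩, ?_⟩
    dsimp only
    rw [Nat.mul_comm c d, ← hc]
    omega
  calc #{p ∈ Ioc n (2 * n) | p.Prime}
      ≤ #(((n - 2).divisors ×ˢ range 5).image fun x ↦ 2 * n - 3 - x.2 * x.1) + 1 :=
        (card_le_card hsub).trans (card_insert_le _ _)
    _ ≤ 5 * #(n - 2).divisors + 1 := by
        grw [card_image_le, card_product, card_range, mul_comm]

theorem Nat.prod_primes_le_pow_factorization_centralBinom_le (n : ℕ) (hn : 0 < n) :
    ∏ p ∈ range (2 * n / 3 + 1) with p.Prime, p ^ n.centralBinom.factorization p ≤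
      (2 * n) ^ (2 * n).sqrt * 4 ^ (2 * n / 3) := by
  set f := fun p ↦ p ^ n.centralBinom.factorization p
  set P := {p ∈ range (2 * n / 3 + 1) | p.Prime}
  rw [← prod_filter_mul_prod_filter_not P (· ≤ (2 * n).sqrt)]
  refine mul_le_mul' ?_ ?_
  · refine (prod_le_pow_card _ _ _ fun p _ ↦ Nat.pow_factorization_choose_le (by omega)).trans
      (Nat.pow_le_pow_right (by omega) ?_)
    refine (card_le_card fun p hp ↦ ?_).trans (Nat.card_Icc 1 _).le
    simp only [P, mem_filter] at hp
    exact mem_Icc.mpr ⟨hp.1.2.one_lt.le, hp.2⟩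
  · -- primes above `√(2n)` divide `centralBinom n` at most once
    refine le_trans ?_ (primorial_le_four_pow _)
    refine (prod_le_prod' fun p hp ↦ (?_ : f p ≤ p)).trans
      (prod_le_prod_of_subset_of_one_le' (filter_subset _ _) fun p hp _ ↦ ?_)
    · simp only [P, mem_filter] at hp
      refine (Nat.pow_le_pow_right hp.1.2.pos ?_).trans (pow_one p).le
      exact Nat.factorization_choose_le_one (Nat.sqrt_lt'.mp (not_le.mp hp.2))
    · exact (mem_filter.mp hp).2.one_lt.le

theorem Nat.centralBinom_le_pow_card_primes_Ioc (n : ℕ) (hn : 2 < n) :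
    n.centralBinom ≤
      (2 * n) ^ (2 * n).sqrt * 4 ^ (2 * n / 3) * (2 * n) ^ #{p ∈ Ioc n (2 * n) | p.Prime} := by
  set f := fun p ↦ p ^ n.centralBinom.factorization p
  set P := {p ∈ range (2 * n + 1) | p.Prime}
  have hP : n.centralBinom = ∏ p ∈ P, f p := by
    rw [prod_filter_of_ne, Nat.prod_pow_factorization_centralBinom]
    intro p _ hp
    by_contra hnp
    exact hp (by simp [f, Nat.factorization_eq_zero_of_not_prime _ hnp])
  have h_small : {p ∈ P | p ≤ 2 * n / 3} = {p ∈ range (2 * n / 3 + 1) | p.Prime} := by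
    ext p
    simp only [P, mem_filter, mem_range]
    exact ⟨fun h ↦ ⟨by omega, h.1.2⟩, fun h ↦ ⟨⟨by omega, h.2⟩, by omega⟩⟩
  -- primes in `(2n/3, n]` do not divide `centralBinom n`
  have h_large : ∏ p ∈ P with ¬p ≤ 2 * n / 3, f p = ∏ p ∈ Ioc n (2 * n) with p.Prime, f p := by
    refine (prod_subset (fun p hp ↦ ?_) fun p hp hpn ↦ ?_).symm
    · simp only [P, mem_filter, mem_Ioc, mem_range] at hp ⊢
      exact ⟨⟨by omega, hp.2⟩, by omega⟩
    · simp only [P, mem_filter, mem_Ioc, mem_range, not_and, not_le] at hp hpn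
      have hp_le : p ≤ n := not_lt.mp fun h ↦ hpn ⟨h, by omega⟩ hp.1.2
      simp [f, Nat.factorization_centralBinom_of_two_mul_self_lt_three_mul hn hp_le (by omega)]
  rw [hP, ← prod_filter_mul_prod_filter_not P (· ≤ 2 * n / 3), h_small, h_large]
  exact mul_le_mul' (Nat.prod_primes_le_pow_factorization_centralBinom_le n (by omega))
    (prod_le_pow_card _ _ _ fun p _ ↦ Nat.pow_factorization_choose_le (by omega))

theorem two_mul_le_two_pow_div_sixtyFour {s : ℕ} (hs : 1024 ≤ s) : 2 * s ≤ 2 ^ (s / 64) := by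
  have key : ∀ u, 16 ≤ u → 128 * (u + 1) ≤ 2 ^ u := by
    intro u hu
    induction u, hu using Nat.le_induction with
    | base => norm_num
    | succ u _ ih => rw [pow_succ]; omega
  have := key (s / 64) (by omega)
  omega

theorem mul_pow_sqrt_mul_four_pow_le_four_pow {n : ℕ} (hn : 2 ^ 20 ≤ n) :
    n * ((2 * n) ^ (2 * n).sqrt * 4 ^ (2 * n / 3) * (2 * n) ^ (10 * n.sqrt + 1)) ≤ 4 ^ n := by
  set s := n.sqrt
  have hs : 1024 ≤ s := Nat.le_sqrt'.mpr (by omega)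
  have h2n : 2 * n ≤ (2 * s) ^ 2 := by
    have := Nat.lt_succ_sqrt' n
    rw [Nat.succ_eq_add_one] at this
    nlinarith
  have hsqrt : (2 * n).sqrt ≤ 2 * s := by simpa using Nat.sqrt_le_sqrt h2n
  have hexp : 2 * (13 * (s * (s / 64))) ≤ 2 * (n - 2 * n / 3) := by
    have hsn : s * s ≤ n := by simpa [sq] using Nat.sqrt_le' n
    have := Nat.mul_le_mul_left s (Nat.div_mul_le_self s 64)
    rw [← mul_assoc] at this
    generalize s * (s / 64) = A at *
    omega
  calc n * ((2 * n) ^ (2 * n).sqrt * 4 ^ (2 * n / 3) * (2 * n) ^ (10 * s + 1))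
      ≤ 2 * n * ((2 * n) ^ (2 * n).sqrt * 4 ^ (2 * n / 3) * (2 * n) ^ (10 * s + 1)) := by
        gcongr; omega
    _ = (2 * n) ^ (1 + (2 * n).sqrt + (10 * s + 1)) * 4 ^ (2 * n / 3) := by ring
    _ ≤ ((2 * s) ^ 2) ^ (13 * s) * 4 ^ (2 * n / 3) := by
        gcongr
        · omega
        · omega
    _ ≤ ((2 ^ (s / 64)) ^ 2) ^ (13 * s) * 4 ^ (2 * n / 3) := by
        grw [two_mul_le_two_pow_div_sixtyFour hs]
    _ = 4 ^ (13 * (s * (s / 64))) * 4 ^ (2 * n / 3) := by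
        congr 1
        rw [← pow_mul, ← pow_mul, show (4 : ℕ) = 2 ^ 2 from rfl, ← pow_mul]
        ring_nf
    _ ≤ 4 ^ (n - 2 * n / 3) * 4 ^ (2 * n / 3) := by gcongr <;> omega
    _ = 4 ^ n := by rw [← pow_add, Nat.sub_add_cancel (by omega)]

theorem hasReductionPrime_of_two_pow_twenty_le {n : ℕ} (hn : 2 ^ 20 ≤ n) :
    HasReductionPrime n := by
  by_contra h
  have hcard : #{p ∈ Ioc n (2 * n) | p.Prime} ≤ 10 * n.sqrt + 1 :=
    calc #{p ∈ Ioc n (2 * n) | p.Prime} ≤ 5 * #(n - 2).divisors + 1 :=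
          card_primes_Ioc_le_of_not_hasReductionPrime (by omega) h
      _ ≤ 5 * (2 * (n - 2).sqrt) + 1 := by grw [Nat.card_divisors_le_two_mul_sqrt]
      _ ≤ 10 * n.sqrt + 1 := by grw [Nat.sqrt_le_sqrt (Nat.sub_le n 2)]; omega
  have := calc 4 ^ n < n * n.centralBinom := Nat.four_pow_lt_mul_centralBinom n (by omega)
    _ ≤ n * ((2 * n) ^ (2 * n).sqrt * 4 ^ (2 * n / 3) * (2 * n) ^ (10 * n.sqrt + 1)) := by
      grw [Nat.centralBinom_le_pow_card_primes_Ioc n (by omega), hcard]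
      omega
    _ ≤ 4 ^ n := mul_pow_sqrt_mul_four_pow_le_four_pow hn
  exact lt_irrefl _ this

theorem hasReductionPrime_of_even {k : ℕ} (hk : Even k) (hk16 : 16 ≤ k) : HasReductionPrime k := by
  rcases lt_or_ge k (2 ^ 20) with hsmall | hlarge
  · exact reductionPrimesBelow_1048703 k hk hk16 (by omega)
  · exact hasReductionPrime_of_two_pow_twenty_le hlarge

/-- For every even integer `k` with `k = 10` or `k ≥ 16`, there exist a prime
`p > k` and an integer `t` such that, with `d = gcd(p − 1, k − 2)` and
`m = (p − 1)/d`, one has `0 < t < m`, `gcd(t, m) = 1`, and both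
`d·t + 2 < k` and `p + 1 − d·t < k`. -/
theorem weight_reduction_exists (k : ℕ) (hk : Even k) (hk' : k = 10 ∨ 16 ≤ k) :
    ∃ p t : ℕ, p.Prime ∧ k < p ∧
      (let d := Nat.gcd (p - 1) (k - 2)
       let m := (p - 1) / d
       0 < t ∧ t < m ∧ Nat.gcd t m = 1 ∧ d * t + 2 < k ∧ p + 1 - d * t < k) := by
  rcases hk' with rfl | hk16
  · exact ⟨11, 2, by norm_num, by norm_num, by norm_num⟩
  obtain ⟨p, hp, hkp, hgood⟩ := hasReductionPrime_of_even hk hk16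
  obtain ⟨t, ht⟩ := exists_weight_reduction hkp hgood
  exact ⟨p, t, hp, hkp, ht⟩
end
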